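/- With u drawn from a (κ, X^{s,q}) Besov measure via a sufficiently regular wavelet basis, for any t < s - d/q and any γ ≥ 1 with d/(γq) < s - d/q - t, one has E[‖u‖_{B^{t}_{γq,γq}}^{γq}] < ∞, and consequently E[‖u‖_{C^t(𝕋^d)}] < ∞ and u ∈ C^t almost surely. -/

import Mathlib

/-!
With `p = γq`, `k = κ^(-1/q)` and `e = (t - s)/d + 1/q`, the `n`-th Besov term is
`(n+1)^(ep - 1) k^p |ξₙ|^p` and the `p`-th power of the `n`-th Hölder coefficient is
`(n+1)^(ep) k^p |ξₙ|^p`. The hypothesis `d/(γq) < s - d/q - t` says exactly `ep < -1`, so both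
weight sequences are summable, and the density `exp(-|x|^q/2)` gives `ξₙ` a finite `p`-th moment;
by monotone convergence both random series have finite expectation. Since `p ≥ 1`, every Hölder
coefficient is at most `1 + ∑ₙ (n+1)^(ep) k^p |ξₙ|^p`, which bounds the `C^t` norm by an integrable
function.
-/

open MeasureTheory Real ProbabilityTheory Set

theorem integrable_comp_abs_of_integrableOn_Ioi {E : Type*} [NormedAddCommGroup E] {f : ℝ → E}
    (hf : IntegrableOn f (Ioi 0)) : Integrable fun x => f |x| := by
  have hIoi : IntegrableOn (fun x => f |x|) (Ioi 0) :=
    hf.congr_fun (fun x hx => by rw [abs_of_pos hx]) measurableSet_Ioi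
  have hIic : IntegrableOn (fun x => f |x|) (Iic 0) := by
    have hneg : MeasurableEmbedding fun x : ℝ => -x := (Homeomorph.neg ℝ).measurableEmbedding
    rw [← Measure.map_neg_eq_self (volume : Measure ℝ), hneg.integrableOn_map_iff]
    simp_rw [Function.comp_def, abs_neg, neg_preimage, neg_Iic, neg_zero]
    exact (integrableOn_Ici_iff_integrableOn_Ioi).mpr hIoi
  have hunion := hIic.union hIoi
  rwa [Iic_union_Ioi, integrableOn_univ] at hunion

theorem integrable_exp_neg_rpow_abs_mul_rpow_abs {p q : ℝ} (hp : -1 < p) (hq : 0 < q) :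
    Integrable fun x : ℝ => exp (-(|x| ^ q) / 2) * |x| ^ p :=
  integrable_comp_abs_of_integrableOn_Ioi (f := fun y => exp (-(y ^ q) / 2) * y ^ p) <|
    (integrableOn_rpow_mul_exp_neg_mul_rpow hp hq one_half_pos).congr_fun
      (fun y _ => by ring_nf) measurableSet_Ioi

theorem lintegral_rpow_abs_withDensity_ne_top {p q : ℝ} (hp : -1 < p) (hq : 0 < q) (c : ℝ) :
    ∫⁻ x, ENNReal.ofReal (|x| ^ p)
      ∂volume.withDensity (fun x => ENNReal.ofReal (c * exp (-(|x| ^ q) / 2))) ≠ ⊤ := by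
  have hint := integrable_exp_neg_rpow_abs_mul_rpow_abs hp hq
  rw [lintegral_withDensity_eq_lintegral_mul _ (by fun_prop) (by fun_prop)]
  simp_rw [Pi.mul_apply, ENNReal.ofReal_mul' (exp_pos _).le, mul_assoc,
    ← ENNReal.ofReal_mul' (rpow_nonneg (abs_nonneg _) _)]
  rw [lintegral_const_mul' _ _ ENNReal.ofReal_ne_top]
  refine ENNReal.mul_ne_top ENNReal.ofReal_ne_top ?_
  exact (lintegral_ofReal_ne_top_iff_integrable hint.aestronglyMeasurable
    (.of_forall fun x => by positivity)).mpr hint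

theorem summable_nat_add_one_rpow {β : ℝ} (hβ : β < -1) :
    Summable fun n : ℕ => ((n : ℝ) + 1) ^ β := by
  simpa using (summable_nat_add_iff 1).mpr (Real.summable_nat_rpow.mpr hβ)

theorem div_add_one_div_mul_lt_neg_one {d q s t p : ℝ} (hd : 0 < d) (hp : 0 < p)
    (h : d / p < s - d / q - t) : ((t - s) / d + 1 / q) * p < -1 := by
  have h' : d < (s - d / q - t) * p := (div_lt_iff₀ hp).mp h
  have hexpand : ((t - s) / d + 1 / q) * p * d = -((s - d / q - t) * p) := by
    field_simp
    ring
  rw [← mul_lt_mul_iff_of_pos_right hd]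
  linarith

theorem rpow_mul_mul_abs_rpow {x k : ℝ} (hx : 0 ≤ x) (hk : 0 ≤ k) (e p y : ℝ) :
    (x ^ e * k * |y|) ^ p = x ^ (e * p) * k ^ p * |y| ^ p := by
  rw [mul_rpow (by positivity) (abs_nonneg y), mul_rpow (rpow_nonneg hx e) hk, ← rpow_mul hx]

theorem rpow_mul_abs_rpow_mul_mul_rpow {x k : ℝ} (hx : 0 < x) (hk : 0 ≤ k) (α σ p y : ℝ) :
    x ^ α * |x ^ σ * k * y| ^ p = x ^ (α + σ * p) * k ^ p * |y| ^ p := by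
  rw [abs_mul, abs_mul, abs_of_pos (rpow_pos_of_pos hx σ), abs_of_nonneg hk,
    rpow_mul_mul_abs_rpow hx.le hk, rpow_add hx]
  ring

theorem le_one_add_tsum_rpow {ι : Type*} {b : ι → ℝ} {p : ℝ} (hb : ∀ i, 0 ≤ b i) (hp : 1 ≤ p)
    (hs : Summable fun i => b i ^ p) (i : ι) : b i ≤ 1 + ∑' j, b j ^ p := by
  have hle : b i ^ p ≤ ∑' j, b j ^ p := hs.le_tsum i fun j _ => rpow_nonneg (hb j) p
  rcases le_or_gt (b i) 1 with h | h
  · linarith [rpow_nonneg (hb i) p]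
  · have : b i ≤ b i ^ p := by simpa using rpow_le_rpow_of_exponent_le h.le hp
    linarith

section IdenticallyDistributed

variable {Ω α ι : Type*} [MeasurableSpace Ω] [MeasurableSpace α] [Countable ι]
  {P : Measure Ω} {μ : Measure α} {X : ι → Ω → α}

theorem lintegral_tsum_mul_comp_of_map_eq (hX : ∀ i, Measurable (X i))
    (hlaw : ∀ i, P.map (X i) = μ) {f : α → ENNReal} (hf : Measurable f) (w : ι → ENNReal) :
    ∫⁻ ω, ∑' i, w i * f (X i ω) ∂P = (∑' i, w i) * ∫⁻ x, f x ∂μ := by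
  rw [lintegral_tsum (f := fun i ω => w i * f (X i ω))
      fun i => ((hf.comp (hX i)).const_mul (w i)).aemeasurable,
    ← ENNReal.tsum_mul_right]
  refine tsum_congr fun i => ?_
  rw [lintegral_const_mul (f := fun ω => f (X i ω)) (w i) (hf.comp (hX i)), ← hlaw i,
    lintegral_map hf (hX i)]

variable {g : α → ℝ} {a : ι → ℝ}

theorem lintegral_tsum_ofReal_mul_comp_ne_top (hX : ∀ i, Measurable (X i))
    (hlaw : ∀ i, P.map (X i) = μ) (hg : Measurable g)
    (hgμ : ∫⁻ x, ENNReal.ofReal (g x) ∂μ ≠ ⊤) (ha0 : ∀ i, 0 ≤ a i) (ha : Summable a) :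
    ∫⁻ ω, ∑' i, ENNReal.ofReal (a i * g (X i ω)) ∂P ≠ ⊤ := by
  simp_rw [ENNReal.ofReal_mul (ha0 _)]
  rw [lintegral_tsum_mul_comp_of_map_eq hX hlaw hg.ennreal_ofReal,
    ← ENNReal.ofReal_tsum_of_nonneg ha0 ha]
  exact ENNReal.mul_ne_top ENNReal.ofReal_ne_top hgμ

theorem integrable_tsum_mul_comp_of_map_eq (hX : ∀ i, Measurable (X i))
    (hlaw : ∀ i, P.map (X i) = μ) (hg : Measurable g) (hg0 : ∀ x, 0 ≤ g x)
    (hgμ : ∫⁻ x, ENNReal.ofReal (g x) ∂μ ≠ ⊤) (ha0 : ∀ i, 0 ≤ a i) (ha : Summable a) :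
    Integrable (fun ω => ∑' i, a i * g (X i ω)) P := by
  have hmeas : Measurable fun ω => ∑' i, ENNReal.ofReal (a i * g (X i ω)) :=
    .tsum fun i => ((hg.comp (hX i)).const_mul _).ennreal_ofReal
  refine (integrable_toReal_of_lintegral_ne_top hmeas.aemeasurable
    (lintegral_tsum_ofReal_mul_comp_ne_top hX hlaw hg hgμ ha0 ha)).congr (.of_forall fun ω => ?_)
  simp only [ENNReal.tsum_toReal_eq fun _ => ENNReal.ofReal_ne_top,
    ENNReal.toReal_ofReal (mul_nonneg (ha0 _) (hg0 _))]

theorem ae_summable_mul_comp_of_map_eq (hX : ∀ i, Measurable (X i))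
    (hlaw : ∀ i, P.map (X i) = μ) (hg : Measurable g) (hg0 : ∀ x, 0 ≤ g x)
    (hgμ : ∫⁻ x, ENNReal.ofReal (g x) ∂μ ≠ ⊤) (ha0 : ∀ i, 0 ≤ a i) (ha : Summable a) :
    ∀ᵐ ω ∂P, Summable fun i => a i * g (X i ω) := by
  have hmeas : Measurable fun ω => ∑' i, ENNReal.ofReal (a i * g (X i ω)) :=
    .tsum fun i => ((hg.comp (hX i)).const_mul _).ennreal_ofReal
  filter_upwards [ae_lt_top hmeas (lintegral_tsum_ofReal_mul_comp_ne_top hX hlaw hg hgμ ha0 ha)]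
    with ω hω
  simpa only [ENNReal.toReal_ofReal (mul_nonneg (ha0 _) (hg0 _))] using
    ENNReal.summable_toReal hω.ne

theorem integrable_iSup_of_ae_le [Nonempty ι] {f : ι → Ω → ℝ} (hf : ∀ i, Measurable (f i))
    (hf0 : ∀ i ω, 0 ≤ f i ω) {F : Ω → ℝ} (hF : Integrable F P)
    (hle : ∀ᵐ ω ∂P, ∀ i, f i ω ≤ F ω) : Integrable (fun ω => ⨆ i, f i ω) P := by
  refine hF.mono' (Measurable.iSup hf).aestronglyMeasurable ?_
  filter_upwards [hle] with ω hω
  rw [norm_of_nonneg (Real.iSup_nonneg fun i => hf0 i ω)]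
  exact ciSup_le hω

end IdenticallyDistributed

theorem besov_moment_and_holder_general
    {Ω : Type*} [MeasurableSpace Ω] (P : Measure Ω) [IsProbabilityMeasure P]
    (q s t κ : ℝ) (d : ℕ) (hd : 1 ≤ d) (hq : 1 ≤ q) (hκ : 0 < κ)
    (γ : ℝ) (hγ : 1 ≤ γ) (hγ2 : (d : ℝ) / (γ * q) < s - (d : ℝ) / q - t)
    (c : ℝ)
    (ξ : ℕ → Ω → ℝ) (hmeas : ∀ l, Measurable (ξ l))
    (hdens : ∀ l, Measure.map (ξ l) P
      = volume.withDensity (fun x => ENNReal.ofReal (c * Real.exp (-(|x| ^ q) / 2)))) :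
    (Integrable (fun ω => ∑' n : ℕ,
        ((n : ℝ) + 1) ^ (t * (γ * q) / (d : ℝ) + (γ * q) / 2 - 1) *
          |((n : ℝ) + 1) ^ (-(s / (d : ℝ) + 1 / 2 - 1 / q)) * κ ^ (-(1 / q)) * ξ n ω| ^ (γ * q)) P)
    ∧ (Integrable (fun ω =>
        ⨆ n : ℕ, ((n : ℝ) + 1) ^ ((t - s) / (d : ℝ) + 1 / q) * κ ^ (-(1 / q)) * |ξ n ω|) P)
    ∧ (∀ᵐ ω ∂P, BddAbove (Set.range fun n : ℕ =>
        ((n : ℝ) + 1) ^ ((t - s) / (d : ℝ) + 1 / q) * κ ^ (-(1 / q)) * |ξ n ω|)) := by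
  set p := γ * q
  set e := (t - s) / (d : ℝ) + 1 / q
  set k := κ ^ (-(1 / q))
  have hp : 1 ≤ p := one_le_mul_of_one_le_of_one_le hγ hq
  have hk : 0 ≤ k := (rpow_pos_of_pos hκ _).le
  have he : e * p < -1 := div_add_one_div_mul_lt_neg_one (by exact_mod_cast hd) (by positivity) hγ2
  have hmom := lintegral_rpow_abs_withDensity_ne_top (p := p) (q := q) (by linarith) (by linarith) c
  have hg : Measurable fun x : ℝ => |x| ^ p := by fun_prop
  have hweight (β : ℝ) (hβ : β < -1) : Summable fun n : ℕ => ((n : ℝ) + 1) ^ β * k ^ p :=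
    (summable_nat_add_one_rpow hβ).mul_right _
  have hn (n : ℕ) : (0 : ℝ) ≤ n + 1 := by positivity
  have hweight0 (β : ℝ) (n : ℕ) : 0 ≤ ((n : ℝ) + 1) ^ β * k ^ p := by positivity
  have hg0 (x : ℝ) : 0 ≤ |x| ^ p := by positivity
  have hsum (β : ℝ) (hβ : β < -1) := integrable_tsum_mul_comp_of_map_eq hmeas hdens hg hg0 hmom
    (hweight0 β) (hweight β hβ)
  have hsup : ∀ᵐ ω ∂P, ∀ n : ℕ, ((n : ℝ) + 1) ^ e * k * |ξ n ω|
      ≤ 1 + ∑' m : ℕ, ((m : ℝ) + 1) ^ (e * p) * k ^ p * |ξ m ω| ^ p := by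
    filter_upwards [ae_summable_mul_comp_of_map_eq hmeas hdens hg hg0 hmom
      (hweight0 (e * p)) (hweight (e * p) he)] with ω hω n
    simp_rw [← rpow_mul_mul_abs_rpow (hn _) hk] at hω ⊢
    exact le_one_add_tsum_rpow (fun m => by positivity) hp hω n
  refine ⟨?_, ?_, hsup.mono fun ω hω => ⟨_, Set.forall_mem_range.2 hω⟩⟩
  · refine (hsum (e * p - 1) (by linarith)).congr (.of_forall fun ω => tsum_congr fun n => ?_)
    rw [rpow_mul_abs_rpow_mul_mul_rpow (by positivity) hk]
    congr 3
    simp only [e, p]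
    ring
  · exact integrable_iSup_of_ae_le (fun n => (hmeas n).abs.const_mul _) (fun n ω => by positivity)
      ((integrable_const 1).add (hsum (e * p) he)) hsup

/-- with u drawn from a (κ, X^{s,q}) Besov measure, for t < s - d/q and
γ ≥ 1 with d/(γq) < s - d/q - t, one has E‖u‖_{B^t_{γq,γq}}^{γq} < ∞, and consequently
E‖u‖_{C^t} < ∞ and u ∈ C^t almost surely (the C^t = B^t_{∞,∞} norm of the draw being
sup_l l^{(t-s)/d+1/q} κ^{-1/q}|ξ_l|). -/
theorem besov_moment_and_holder
    {Ω : Type*} [MeasurableSpace Ω] (P : Measure Ω) [IsProbabilityMeasure P]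
    (q s t κ : ℝ) (d : ℕ) (hd : 1 ≤ d) (hq : 1 ≤ q) (hs : 0 < s) (hκ : 0 < κ)
    (ht : t < s - (d : ℝ) / q)
    (γ : ℝ) (hγ : 1 ≤ γ) (hγ2 : (d : ℝ) / (γ * q) < s - (d : ℝ) / q - t)
    (c : ℝ) (hc : 0 < c)
    (ξ : ℕ → Ω → ℝ) (hmeas : ∀ l, Measurable (ξ l))
    (hindep : iIndepFun ξ P)
    (hdens : ∀ l, Measure.map (ξ l) P
      = volume.withDensity (fun x => ENNReal.ofReal (c * Real.exp (-(|x| ^ q) / 2)))) :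
    (Integrable (fun ω => ∑' n : ℕ,
        ((n : ℝ) + 1) ^ (t * (γ * q) / (d : ℝ) + (γ * q) / 2 - 1) *
          |((n : ℝ) + 1) ^ (-(s / (d : ℝ) + 1 / 2 - 1 / q)) * κ ^ (-(1 / q)) * ξ n ω| ^ (γ * q)) P)
    ∧ (Integrable (fun ω =>
        ⨆ n : ℕ, ((n : ℝ) + 1) ^ ((t - s) / (d : ℝ) + 1 / q) * κ ^ (-(1 / q)) * |ξ n ω|) P)
    ∧ (∀ᵐ ω ∂P, BddAbove (Set.range fun n : ℕ =>
        ((n : ℝ) + 1) ^ ((t - s) / (d : ℝ) + 1 / q) * κ ^ (-(1 / q)) * |ξ n ω|)) :=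
  besov_moment_and_holder_general P q s t κ d hd hq hκ γ hγ hγ2 c ξ hmeas hdens
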